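/- Lower bound on excess prediction risk in statistical learning: Fix η > 0 and an integer 1 ≤ r ≤ min(m1, m2) with max(m1,m2)·r ≤ n. Let (X_i, Y_i) be i.i.d. realizations of (X, Y) with distribution P_{XY}, and R(A) = E[(Y − ⟨A, X⟩)²]. Then inf over all estimators Â of sup over matrices A with rank(A) ≤ r of sup over P_{XY} ∈ 𝒫_η of P( R(Â) ≥ R(A) + c η² max(m1,m2) r / n ) ≥ β, where β ∈ (0,1) and c > 0 are absolute constants. -/

import Mathlib

open MeasureTheory ProbabilityTheory Matrix Real
open scoped ENNReal NNReal BigOperators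

noncomputable section

instance {m1 m2 : ℕ} : MeasurableSpace (Matrix (Fin m1) (Fin m2) ℝ) :=
  (inferInstance : MeasurableSpace (Fin m1 → Fin m2 → ℝ))

/-- Trace inner product `⟨A,B⟩ = tr(AᵀB)`. -/
def tip {m1 m2 : ℕ} (A B : Matrix (Fin m1) (Fin m2) ℝ) : ℝ := (Aᵀ * B).trace

/-- Frobenius norm `‖A‖₂`. -/
def frob {m1 m2 : ℕ} (A : Matrix (Fin m1) (Fin m2) ℝ) : ℝ :=
  Real.sqrt (∑ i, ∑ j, (A i j) ^ 2)

/-- Singular values (unordered): square roots of the eigenvalues of `AᴴA`. -/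
def sval {m1 m2 : ℕ} (A : Matrix (Fin m1) (Fin m2) ℝ) (j : Fin m2) : ℝ :=
  Real.sqrt (((by simpa [Matrix.conjTranspose_eq_transpose_of_trivial] using Matrix.isHermitian_conjTranspose_mul_self A : (Aᵀ * A).IsHermitian)).eigenvalues j)

/-- Nuclear norm `‖A‖₁`: sum of singular values. -/
def nuc {m1 m2 : ℕ} (A : Matrix (Fin m1) (Fin m2) ℝ) : ℝ := ∑ j, sval A j

/-- Operator (spectral) norm `‖A‖_∞`. -/
def opnorm {m1 m2 : ℕ} (A : Matrix (Fin m1) (Fin m2) ℝ) : ℝ :=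
  ‖LinearMap.toContinuousLinearMap (Matrix.toEuclideanLin A)‖

/-- Squared `L₂(Π)`-norm: `‖A‖²_{L₂(Π)} = (1/n) ∑ᵢ E⟨A, Xᵢ⟩²`. -/
def l2sq {Ω : Type*} [MeasurableSpace Ω] (μ : Measure Ω) {n m1 m2 : ℕ}
    (X : Fin n → Ω → Matrix (Fin m1) (Fin m2) ℝ) (A : Matrix (Fin m1) (Fin m2) ℝ) : ℝ :=
  (1 / (n : ℝ)) * ∑ i, ∫ ω, (tip A (X i ω)) ^ 2 ∂μ

/-- The matrix `E(Yᵢ Xᵢ)` (entrywise expectation). -/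
def meanYX {Ω : Type*} [MeasurableSpace Ω] (μ : Measure Ω) {n m1 m2 : ℕ}
    (X : Fin n → Ω → Matrix (Fin m1) (Fin m2) ℝ) (Y : Fin n → Ω → ℝ) (i : Fin n) :
    Matrix (Fin m1) (Fin m2) ℝ :=
  Matrix.of fun j k => ∫ ω, Y i ω * X i ω j k ∂μ

/-- The stochastic error matrix `M = (1/n) ∑ᵢ (Yᵢ Xᵢ − E(Yᵢ Xᵢ))`. -/
def errM {Ω : Type*} [MeasurableSpace Ω] (μ : Measure Ω) {n m1 m2 : ℕ}
    (X : Fin n → Ω → Matrix (Fin m1) (Fin m2) ℝ) (Y : Fin n → Ω → ℝ) (ω : Ω) :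
    Matrix (Fin m1) (Fin m2) ℝ :=
  (n : ℝ)⁻¹ • ∑ i, (Y i ω • X i ω - meanYX μ X Y i)

/-- The penalized objective `L_n(A) = ‖A‖²_{L₂(Π)} − ⟨(2/n)∑ᵢYᵢXᵢ, A⟩ + λ‖A‖₁`. -/
def Ln {Ω : Type*} [MeasurableSpace Ω] (μ : Measure Ω) {n m1 m2 : ℕ}
    (X : Fin n → Ω → Matrix (Fin m1) (Fin m2) ℝ) (Y : Fin n → Ω → ℝ) (lam : ℝ)
    (A : Matrix (Fin m1) (Fin m2) ℝ) (ω : Ω) : ℝ :=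
  l2sq μ X A - tip ((2 / (n : ℝ)) • ∑ i, Y i ω • X i ω) A + lam * nuc A

/-- Matrix of the orthogonal projection onto a subspace of `ℝ^d`. -/
def projMat {d : ℕ} (K : Submodule ℝ (EuclideanSpace ℝ (Fin d))) : Matrix (Fin d) (Fin d) ℝ :=
  Matrix.toEuclideanLin.symm (K.subtype ∘ₗ (K.orthogonalProjectionOnto).toLinearMap)

/-- Column space of `A` (the span of its left singular vectors `S₁`). -/
def colSpan {m1 m2 : ℕ} (A : Matrix (Fin m1) (Fin m2) ℝ) :
    Submodule ℝ (EuclideanSpace ℝ (Fin m1)) := LinearMap.range (Matrix.toEuclideanLin A)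

/-- Row space of `A` (the span of its right singular vectors `S₂`). -/
def rowSpan {m1 m2 : ℕ} (A : Matrix (Fin m1) (Fin m2) ℝ) :
    Submodule ℝ (EuclideanSpace ℝ (Fin m2)) := LinearMap.range (Matrix.toEuclideanLin Aᵀ)

/-- `𝒫_A^⊥(B) = P_{S₁ᗮ} B P_{S₂ᗮ}` where `(S₁, S₂)` is the support of `A`. -/
def Pperp {m1 m2 : ℕ} (A B : Matrix (Fin m1) (Fin m2) ℝ) : Matrix (Fin m1) (Fin m2) ℝ :=
  projMat (colSpan A)ᗮ * B * projMat (rowSpan A)ᗮ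

/-- `𝒫_A(B) = B - P_{S₁ᗮ} B P_{S₂ᗮ}`. -/
def calP {m1 m2 : ℕ} (A B : Matrix (Fin m1) (Fin m2) ℝ) : Matrix (Fin m1) (Fin m2) ℝ :=
  B - Pperp A B

/-- The uniform distribution on the matrix completion basis
`𝒳 = {eⱼ(m₁) eₖ(m₂)ᵀ}`. -/
def unifX (m1 m2 : ℕ) : Measure (Matrix (Fin m1) (Fin m2) ℝ) :=
  ((m1 * m2 : ℝ≥0∞))⁻¹ •
    ∑ j : Fin m1, ∑ k : Fin m2, Measure.dirac (Matrix.single j k (1 : ℝ))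

/-- The matrix `𝐗 = (m₁m₂/n) ∑ᵢ Yᵢ Xᵢ`. -/
def hatX {Ω : Type*} {n m1 m2 : ℕ} (X : Fin n → Ω → Matrix (Fin m1) (Fin m2) ℝ)
    (Y : Fin n → Ω → ℝ) (ω : Ω) : Matrix (Fin m1) (Fin m2) ℝ :=
  ((m1 * m2 : ℝ) / (n : ℝ)) • ∑ i, Y i ω • X i ω

/-- The matrix-completion objective `‖A − B‖₂² + λ m₁m₂ ‖A‖₁`. -/
def Fobj {m1 m2 : ℕ} (lam : ℝ) (B A : Matrix (Fin m1) (Fin m2) ℝ) : ℝ :=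
  frob (A - B) ^ 2 + lam * (m1 * m2 : ℝ) * nuc A

/-- The prediction risk `R(A) = E[(Y − ⟨A,X⟩)²]` under the distribution `P` of `(X,Y)`. -/
def risk {m1 m2 : ℕ} (P : Measure (Matrix (Fin m1) (Fin m2) ℝ × ℝ))
    (A : Matrix (Fin m1) (Fin m2) ℝ) : ℝ :=
  ∫ p, (p.2 - tip A p.1) ^ 2 ∂P

/-- Membership in the class `𝒫_η`: `X ~ Π₀` (uniform on the matrix completion basis) and
`|Y| ≤ η` almost surely. -/
def memPeta (m1 m2 : ℕ) (η : ℝ) (P : Measure (Matrix (Fin m1) (Fin m2) ℝ × ℝ)) : Prop :=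
  IsProbabilityMeasure P ∧ P.map Prod.fst = unifX m1 m2 ∧ (∀ᵐ p ∂P, |p.2| ≤ η)

/-- The law of an i.i.d. sample of size `n` from `P`. -/
def iidSample {α : Type*} [MeasurableSpace α] (n : ℕ) (P : Measure α)
    (hP : IsProbabilityMeasure P) : Measure (Fin n → α) :=
  haveI := hP
  Measure.pi fun _ => P

/-!
Assouad's method. Split the entries into `a × b` blocks by residues modulo `a` and `b`, with
`a b = max m₁ m₂ · r` and `min a b ≤ r`. For a sign pattern `σ` on the blocks let `Y = ±η` with
probabilities `(1 ± τ σ(block of X)) / 2`, where `τ² = a b / (16 n)`. The regression matrix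
`A_σ = (η τ σ(block))` has rank at most `min a b ≤ r`, and the excess risk of any `B` is
`‖B - A_σ‖₂² / (m₁ m₂)`. Flipping one sign changes the law of one observation only on a block
of mass at most `4 / (a b)`, so the Bhattacharyya affinity of the two `n`-sample laws stays
above `3 / 4` and no test can tell them apart with error below `1 / 4` under both. Averaging
over `σ` then gives a `σ` under which, with probability at least `1 / 16`, the estimate
has the wrong block sum sign on `a b / 16` blocks; each such block costs at least
`(m₁ m₂ / (4 a b)) (η τ)²`, for a total excess risk of `(η τ)² / 64 = η² max m₁ m₂ · r / (1024 n)`.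
-/

open Finset

section DiscreteMeasure

variable {ι α : Type*}

def piWeight (w : ι → ℝ) (n : ℕ) (f : Fin n → ι) : ℝ := ∏ i, w (f i)

lemma piWeight_nonneg {w : ι → ℝ} (hw : 0 ≤ w) (n : ℕ) : 0 ≤ piWeight w n :=
  fun _ => prod_nonneg fun _ _ => hw _

variable [Fintype ι]

def wprob (w : ι → ℝ) (E : Set ι) : ℝ := ∑ q, E.indicator w q

lemma wprob_nonneg {w : ι → ℝ} (hw : 0 ≤ w) (E : Set ι) : 0 ≤ wprob w E :=
  sum_nonneg fun q _ => Set.indicator_nonneg (fun q _ => hw q) q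

lemma wprob_mono {w : ι → ℝ} (hw : 0 ≤ w) {E F : Set ι} (hEF : E ⊆ F) : wprob w E ≤ wprob w F :=
  sum_le_sum fun q _ => Set.indicator_le_indicator_of_subset hEF hw q

lemma wprob_le_one {w : ι → ℝ} (hw : 0 ≤ w) (hw1 : ∑ q, w q = 1) (E : Set ι) :
    wprob w E ≤ 1 :=
  hw1 ▸ sum_le_sum fun q _ => Set.indicator_le_self' (fun q _ => hw q) q

lemma sum_piWeight (w : ι → ℝ) (n : ℕ) : ∑ f, piWeight w n f = (∑ q, w q) ^ n := by
  simp only [piWeight, ← Fintype.piFinset_univ, ← prod_univ_sum, prod_const, card_univ,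
    Fintype.card_fin]

variable [MeasurableSpace α] [MeasurableSingletonClass α]

def discreteMeasure (w : ι → ℝ) (x : ι → α) : Measure α :=
  ∑ q, ENNReal.ofReal (w q) • Measure.dirac (x q)

lemma discreteMeasure_apply {w : ι → ℝ} (hw : 0 ≤ w) (x : ι → α) (s : Set α) :
    discreteMeasure w x s = ENNReal.ofReal (wprob w (x ⁻¹' s)) := by
  rw [wprob, ENNReal.ofReal_sum_of_nonneg fun q _ => Set.indicator_nonneg (fun q _ => hw q) q]
  simp only [discreteMeasure, Measure.coe_finsetSum, Finset.sum_apply, Measure.smul_apply,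
    Measure.dirac_apply, smul_eq_mul]
  refine sum_congr rfl fun q _ => ?_
  by_cases h : x q ∈ s <;> simp [h]

lemma isProbabilityMeasure_discreteMeasure {w : ι → ℝ} (hw : 0 ≤ w) (hw1 : ∑ q, w q = 1)
    (x : ι → α) : IsProbabilityMeasure (discreteMeasure w x) := by
  constructor
  simp [discreteMeasure_apply hw, wprob, hw1]

lemma map_discreteMeasure {β : Type*} [MeasurableSpace β] [MeasurableSingletonClass β]
    {w : ι → ℝ} (hw : 0 ≤ w) (x : ι → α) {f : α → β} (hf : Measurable f) :
    (discreteMeasure w x).map f = discreteMeasure w (f ∘ x) := by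
  ext s hs
  rw [Measure.map_apply hf hs, discreteMeasure_apply hw, discreteMeasure_apply hw]
  rfl

lemma discreteMeasure_prod_bool {κ : Type*} [Fintype κ] {w : κ × Bool → ℝ} (hw : 0 ≤ w)
    {v : κ → ℝ} (hv : 0 ≤ v) (hwv : ∀ p, w (p, true) + w (p, false) = v p) (x : κ → α) :
    discreteMeasure w (fun q => x q.1) = discreteMeasure v x := by
  ext s -
  rw [discreteMeasure_apply hw, discreteMeasure_apply hv, wprob, wprob, Fintype.sum_prod_type]
  congr 1
  refine sum_congr rfl fun p _ => ?_
  by_cases h : x p ∈ s <;> simp [h, ← hwv p]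

lemma integral_discreteMeasure {w : ι → ℝ} (hw : 0 ≤ w) (x : ι → α) (g : α → ℝ) :
    ∫ p, g p ∂discreteMeasure w x = ∑ q, w q * g (x q) := by
  rw [discreteMeasure, integral_finsetSum_measure fun q _ =>
    (integrable_dirac enorm_lt_top).smul_measure ENNReal.ofReal_ne_top]
  refine sum_congr rfl fun q _ => ?_
  rw [integral_smul_measure, integral_dirac, ENNReal.toReal_ofReal (hw q), smul_eq_mul]

lemma pi_discreteMeasure {w : ι → ℝ} (hw : 0 ≤ w) (hw1 : ∑ q, w q = 1) (x : ι → α) (n : ℕ) :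
    Measure.pi (fun _ : Fin n => discreteMeasure w x) =
      discreteMeasure (piWeight w n) (fun f i => x (f i)) := by
  classical
  have := isProbabilityMeasure_discreteMeasure hw hw1 x
  refine Measure.pi_eq (μ := fun _ : Fin n => discreteMeasure w x) fun s _ => ?_
  simp only [discreteMeasure_apply (piWeight_nonneg hw n), discreteMeasure_apply hw,
    ← ENNReal.ofReal_prod_of_nonneg fun i _ => wprob_nonneg hw _]
  congr 1
  simp only [wprob, prod_univ_sum, Fintype.piFinset_univ, Set.indicator_apply, prod_ite_zero,
    piWeight]
  simp

end DiscreteMeasure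

section Affinity

variable {ι : Type*} [Fintype ι] {p q : ι → ℝ}

def affinity (p q : ι → ℝ) : ℝ := ∑ i, √(p i * q i)

lemma affinity_piWeight (hp : 0 ≤ p) (hq : 0 ≤ q) (n : ℕ) :
    affinity (piWeight p n) (piWeight q n) = affinity p q ^ n := by
  have hsplit (f : Fin n → ι) :
      √(piWeight p n f * piWeight q n f) = piWeight (fun i => √(p i * q i)) n f := by
    rw [piWeight, piWeight, piWeight, ← prod_mul_distrib,
      Real.sqrt_prod _ fun i _ => mul_nonneg (hp _) (hq _)]
  simp only [affinity, hsplit, sum_piWeight]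

lemma sum_indicator_sqrt_mul_le (hp : 0 ≤ p) (hq : 0 ≤ q) (E : Set ι) :
    ∑ i, E.indicator (fun i => √(p i * q i)) i ≤ √(wprob p E) * √(wprob q E) := by
  have hind (i : ι) : E.indicator (fun i => √(p i * q i)) i =
      √(E.indicator p i) * √(E.indicator q i) := by
    by_cases h : i ∈ E <;> simp [h, Real.sqrt_mul (hp i)]
  simp only [hind]
  exact Real.sum_sqrt_mul_sqrt_le _ (fun i => Set.indicator_nonneg (fun i _ => hp i) i)
    (fun i => Set.indicator_nonneg (fun i _ => hq i) i)

/-- Le Cam's two-point inequality. -/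
lemma affinity_sq_le (hp : 0 ≤ p) (hq : 0 ≤ q) (hp1 : ∑ i, p i = 1) (hq1 : ∑ i, q i = 1)
    (E : Set ι) : affinity p q ^ 2 ≤ 2 * (wprob p E + wprob q Eᶜ) := by
  have hE : ∑ i, E.indicator (fun i => √(p i * q i)) i ≤ √(wprob p E) :=
    (sum_indicator_sqrt_mul_le hp hq E).trans <| mul_le_of_le_one_right (Real.sqrt_nonneg _) <|
      Real.sqrt_le_one.mpr (wprob_le_one hq hq1 E)
  have hEc : ∑ i, Eᶜ.indicator (fun i => √(p i * q i)) i ≤ √(wprob q Eᶜ) :=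
    (sum_indicator_sqrt_mul_le hp hq Eᶜ).trans <| mul_le_of_le_one_left (Real.sqrt_nonneg _) <|
      Real.sqrt_le_one.mpr (wprob_le_one hp hp1 Eᶜ)
  have hsum : affinity p q = ∑ i, E.indicator (fun i => √(p i * q i)) i +
      ∑ i, Eᶜ.indicator (fun i => √(p i * q i)) i := by
    simp only [affinity, ← sum_add_distrib, Set.indicator_self_add_compl_apply]
  have h0 : 0 ≤ ∑ i, E.indicator (fun i => √(p i * q i)) i :=
    sum_nonneg fun i _ => Set.indicator_nonneg (fun _ _ => Real.sqrt_nonneg _) i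
  have h0c : 0 ≤ ∑ i, Eᶜ.indicator (fun i => √(p i * q i)) i :=
    sum_nonneg fun i _ => Set.indicator_nonneg (fun _ _ => Real.sqrt_nonneg _) i
  rw [hsum, ← Real.sq_sqrt (wprob_nonneg hp E), ← Real.sq_sqrt (wprob_nonneg hq Eᶜ)]
  nlinarith [sq_nonneg (√(wprob p E) - √(wprob q Eᶜ))]

lemma three_quarters_le_one_sub_pow {n : ℕ} (hn : 0 < n) : 3 / 4 ≤ (1 - 1 / (4 * n : ℝ)) ^ n := by
  have hn' : (1 : ℝ) ≤ n := by exact_mod_cast hn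
  have hbern := one_add_mul_le_pow (a := -(1 / (4 * n : ℝ))) (by
    rw [neg_le_neg_iff, div_le_iff₀ (by positivity)]; linarith) n
  have hx : (n : ℝ) * -(1 / (4 * n)) = -(1 / 4) := by field_simp
  simp only [hx, ← sub_eq_add_neg] at hbern
  linarith

lemma quarter_le_wprob_piWeight_add_compl (hp : 0 ≤ p) (hq : 0 ≤ q) (hp1 : ∑ i, p i = 1)
    (hq1 : ∑ i, q i = 1) {n : ℕ} (hn : 0 < n) (haff : 1 - 1 / (4 * n : ℝ) ≤ affinity p q)
    (E : Set (Fin n → ι)) :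
    1 / 4 ≤ wprob (piWeight p n) E + wprob (piWeight q n) Eᶜ := by
  have hsum (w : ι → ℝ) (hw1 : ∑ i, w i = 1) : ∑ f, piWeight w n f = 1 := by
    rw [sum_piWeight, hw1, one_pow]
  have hle := affinity_sq_le (piWeight_nonneg hp n) (piWeight_nonneg hq n) (hsum p hp1)
    (hsum q hq1) E
  have hbase : 0 ≤ 1 - 1 / (4 * n : ℝ) := by
    have hn' : (1 : ℝ) ≤ n := by exact_mod_cast hn
    rw [sub_nonneg, div_le_one (by positivity)]
    linarith
  have hpow : 3 / 4 ≤ affinity (piWeight p n) (piWeight q n) := by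
    rw [affinity_piWeight hp hq]
    exact (three_quarters_le_one_sub_pow hn).trans (pow_le_pow_left₀ hbase haff n)
  nlinarith [pow_le_pow_left₀ (by norm_num) hpow 2]

end Affinity

section Assouad

variable {κ Ω : Type*} [Fintype κ] [DecidableEq κ] [Fintype Ω]

lemma sum_mul_le_add_mul_wprob {p : Ω → ℝ} (hp : 0 ≤ p) (hp1 : ∑ ω, p ω = 1) {N : Ω → ℝ}
    {t K : ℝ} (ht : 0 ≤ t) (hNK : ∀ ω, N ω ≤ K) :
    ∑ ω, p ω * N ω ≤ t + K * wprob p {ω | t ≤ N ω} := by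
  have hpt (ω : Ω) : p ω * N ω ≤ p ω * t + K * {ω | t ≤ N ω}.indicator p ω := by
    by_cases h : t ≤ N ω
    · simp only [Set.indicator_of_mem (show ω ∈ {ω | t ≤ N ω} from h)]
      nlinarith [show (0 : ℝ) ≤ p ω from hp ω, hNK ω]
    · simp only [Set.indicator_of_notMem (show ω ∉ {ω | t ≤ N ω} from h), mul_zero, add_zero]
      exact mul_le_mul_of_nonneg_left (not_le.mp h).le (hp ω)
  calc ∑ ω, p ω * N ω ≤ ∑ ω, (p ω * t + K * {ω | t ≤ N ω}.indicator p ω) :=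
        sum_le_sum fun ω _ => hpt ω
    _ = t + K * wprob p {ω | t ≤ N ω} := by
        rw [sum_add_distrib, ← sum_mul, hp1, one_mul, wprob, mul_sum]

lemma card_mul_le_two_mul_sum_of_flip (k : κ) {g : (κ → Bool) → ℝ} {α : ℝ}
    (hg : ∀ σ, α ≤ g σ + g (Function.update σ k (!σ k))) :
    Fintype.card (κ → Bool) * α ≤ 2 * ∑ σ, g σ := by
  have hflip : Function.Involutive fun σ : κ → Bool => Function.update σ k (!σ k) :=
    fun σ => by simp
  calc (Fintype.card (κ → Bool) : ℝ) * α = ∑ _σ : κ → Bool, α := by simp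
    _ ≤ ∑ σ, (g σ + g (Function.update σ k (!σ k))) := sum_le_sum fun σ _ => hg σ
    _ = 2 * ∑ σ, g σ := by
        have hperm := Equiv.sum_comp (hflip.toPerm _) g
        rw [Function.Involutive.coe_toPerm] at hperm
        rw [sum_add_distrib, hperm]
        ring

/-- Assouad's lemma. -/
theorem exists_wprob_card_wrong_ge [Nonempty κ] {P : (κ → Bool) → Ω → ℝ} (hP : ∀ σ, 0 ≤ P σ)
    (hP1 : ∀ σ, ∑ ω, P σ ω = 1) {W : (κ → Bool) → κ → Set Ω} {α : ℝ} (hα : 0 ≤ α)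
    (hpair : ∀ σ k, α ≤ wprob (P σ) (W σ k) +
      wprob (P (Function.update σ k (!σ k))) (W (Function.update σ k (!σ k)) k)) :
    ∃ σ, α / 4 ≤ wprob (P σ) {ω | α * Fintype.card κ / 4 ≤ ∑ k, (W σ k).indicator 1 ω} := by
  set K : ℝ := (Fintype.card κ : ℝ)
  set C : ℝ := (Fintype.card (κ → Bool) : ℝ)
  set G := fun σ => {ω | α * K / 4 ≤ ∑ k, (W σ k).indicator (1 : Ω → ℝ) ω}
  have hK : 0 < K := by simp [K, Fintype.card_pos]
  have hupper (σ : κ → Bool) :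
      ∑ k, wprob (P σ) (W σ k) ≤ α * K / 4 + K * wprob (P σ) (G σ) := by
    have hcount : ∑ k, wprob (P σ) (W σ k) =
        ∑ ω, P σ ω * ∑ k, (W σ k).indicator (1 : Ω → ℝ) ω := by
      simp only [wprob, mul_sum]
      rw [sum_comm]
      refine sum_congr rfl fun ω _ => sum_congr rfl fun k _ => ?_
      by_cases h : ω ∈ W σ k <;> simp [h]
    rw [hcount]
    refine sum_mul_le_add_mul_wprob (hP σ) (hP1 σ) (by positivity) fun ω => ?_
    calc ∑ k, (W σ k).indicator (1 : Ω → ℝ) ω ≤ ∑ _k : κ, (1 : ℝ) :=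
          sum_le_sum fun k _ => Set.indicator_le_self' (fun _ _ => zero_le_one) ω
      _ = K := by simp [K]
  have hlower : K * (C * α) ≤ 2 * ∑ σ, ∑ k, wprob (P σ) (W σ k) := by
    rw [sum_comm, mul_sum]
    calc K * (C * α) = ∑ _k : κ, C * α := by simp [K]
      _ ≤ ∑ k, 2 * ∑ σ, wprob (P σ) (W σ k) :=
          sum_le_sum fun k _ => card_mul_le_two_mul_sum_of_flip k (hpair · k)
  have htotal : C * (α / 4) ≤ ∑ σ, wprob (P σ) (G σ) := by
    have := sum_le_sum fun σ (_ : σ ∈ univ) => hupper σ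
    rw [sum_add_distrib, sum_const, card_univ, nsmul_eq_mul, ← mul_sum] at this
    nlinarith
  obtain ⟨σ, -, hσ⟩ := exists_le_of_sum_le (f := fun _ => α / 4)
    (g := fun σ => wprob (P σ) (G σ)) univ_nonempty
    (by rwa [sum_const, card_univ, nsmul_eq_mul])
  exact ⟨σ, hσ⟩

end Assouad

section Blocks

variable {a : ℕ} [NeZero a]

def blockFiber (m : ℕ) (t : Fin a) : Finset (Fin m) := {j | Fin.ofNat a j = t}

lemma card_blockFiber (m : ℕ) (t : Fin a) :
    #(blockFiber m t) = m / a + if t.val < m % a then 1 else 0 := by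
  have hmod : t.val % a = t.val := Nat.mod_eq_of_lt t.isLt
  have h := Nat.count_modEq_card m (Nat.pos_of_neZero a) t.val
  rw [hmod, Nat.count_eq_card_filter_range] at h
  rw [← h, blockFiber, card_filter, card_filter, ← Fin.sum_univ_eq_sum_range]
  refine sum_congr rfl fun j _ => ?_
  simp [Fin.ext_iff, Nat.ModEq, hmod]

variable {m : ℕ}

lemma div_two_mul_le_card_blockFiber (ham : a ≤ m) (t : Fin a) :
    (m : ℝ) / (2 * a) ≤ #(blockFiber m t) := by
  have ha : 0 < a := Nat.pos_of_neZero a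
  have hq : 1 ≤ m / a := (Nat.one_le_div_iff ha).2 ham
  have hnat : m ≤ 2 * #(blockFiber m t) * a := by
    have := Nat.div_add_mod m a
    have := Nat.mod_lt m ha
    have hcard : m / a ≤ #(blockFiber m t) := by rw [card_blockFiber]; omega
    nlinarith
  rw [div_le_iff₀ (by positivity)]
  exact_mod_cast (by linarith : m ≤ #(blockFiber m t) * (2 * a))

lemma card_blockFiber_le_two_mul_div (ham : a ≤ m) (t : Fin a) :
    (#(blockFiber m t) : ℝ) ≤ 2 * m / a := by
  have hq : 1 ≤ m / a := (Nat.one_le_div_iff (Nat.pos_of_neZero a)).2 ham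
  have hnat : #(blockFiber m t) ≤ 2 * (m / a) := by
    rw [card_blockFiber]
    split_ifs <;> omega
  calc (#(blockFiber m t) : ℝ) ≤ 2 * ((m / a : ℕ) : ℝ) := by exact_mod_cast hnat
    _ ≤ 2 * m / a := by rw [mul_div_assoc]; gcongr; exact Nat.cast_div_le

end Blocks

section Hypotheses

instance {m1 m2 : ℕ} : MeasurableSingletonClass (Matrix (Fin m1) (Fin m2) ℝ) :=
  (inferInstance : MeasurableSingletonClass (Fin m1 → Fin m2 → ℝ))

lemma tip_single {m1 m2 : ℕ} (A : Matrix (Fin m1) (Fin m2) ℝ) (j : Fin m1) (k : Fin m2) :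
    tip A (Matrix.single j k 1) = A j k := by
  simp [tip, Matrix.trace, Matrix.mul_apply, Matrix.single_apply, ite_and, sum_ite_eq]

def boolSign (s : Bool) : ℝ := if s then 1 else -1

lemma boolSign_not (s : Bool) : boolSign (!s) = -boolSign s := by cases s <;> simp [boolSign]

lemma boolSign_sq (s : Bool) : boolSign s ^ 2 = 1 := by cases s <;> simp [boolSign]

variable {m1 m2 a b : ℕ} [NeZero a] [NeZero b]

def blockOf (p : Fin m1 × Fin m2) : Fin a × Fin b := (Fin.ofNat a p.1, Fin.ofNat b p.2)

/-- Under hypothesis `σ` the label is `±η` with probabilities `(1 ± τ s) / 2`, where `s` is the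
sign that `σ` gives to the block of the observed entry. -/
def hypWeight (τ : ℝ) (σ : Fin a × Fin b → Bool) (q : (Fin m1 × Fin m2) × Bool) : ℝ :=
  (1 + τ * boolSign (σ (blockOf q.1)) * boolSign q.2) / (2 * (m1 * m2))

def hypAtom (η : ℝ) (q : (Fin m1 × Fin m2) × Bool) : Matrix (Fin m1) (Fin m2) ℝ × ℝ :=
  (Matrix.single q.1.1 q.1.2 1, boolSign q.2 * η)

def hypLaw (m1 m2 : ℕ) (η τ : ℝ) (σ : Fin a × Fin b → Bool) :
    Measure (Matrix (Fin m1) (Fin m2) ℝ × ℝ) :=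
  discreteMeasure (hypWeight τ σ) (hypAtom η)

/-- The regression function `E[Y | X]` under `hypLaw m1 m2 η τ σ`. -/
def hypMatrix (m1 m2 : ℕ) (η τ : ℝ) (σ : Fin a × Fin b → Bool) : Matrix (Fin m1) (Fin m2) ℝ :=
  (of fun t s => η * τ * boolSign (σ (t, s))).submatrix (Fin.ofNat a ·) (Fin.ofNat b ·)

variable {η τ : ℝ} {σ : Fin a × Fin b → Bool}

lemma hypMatrix_apply (j : Fin m1) (k : Fin m2) :
    hypMatrix m1 m2 η τ σ j k = η * τ * boolSign (σ (blockOf (j, k))) := rfl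

lemma rank_hypMatrix_le : (hypMatrix m1 m2 η τ σ).rank ≤ min a b :=
  (rank_submatrix_le _ _ _).trans (le_min (rank_le_height _) (rank_le_width _))

lemma hypWeight_nonneg (hτ : |τ| ≤ 1) : 0 ≤ (hypWeight τ σ : (Fin m1 × Fin m2) × Bool → ℝ) := by
  intro q
  obtain ⟨hτl, hτu⟩ := abs_le.mp hτ
  refine div_nonneg ?_ (by positivity)
  cases σ (blockOf q.1) <;> cases q.2 <;> simp [boolSign] <;> linarith

lemma hypWeight_true_add_false (p : Fin m1 × Fin m2) :
    hypWeight τ σ (p, true) + hypWeight τ σ (p, false) = 1 / (m1 * m2) := by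
  simp only [hypWeight, boolSign, if_true, Bool.false_eq_true, if_false]
  ring

lemma sum_hypWeight (hm1 : 0 < m1) (hm2 : 0 < m2) :
    ∑ q : (Fin m1 × Fin m2) × Bool, hypWeight τ σ q = 1 := by
  simp only [Fintype.sum_prod_type (f := hypWeight τ σ), Fintype.sum_bool,
    hypWeight_true_add_false, sum_const, card_univ, Fintype.card_prod, Fintype.card_fin,
    nsmul_eq_mul]
  field_simp
  push_cast
  ring

lemma unifX_eq_discreteMeasure (hm1 : 0 < m1) (hm2 : 0 < m2) :
    unifX m1 m2 = discreteMeasure (fun _ => 1 / (m1 * m2 : ℝ))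
      (fun p : Fin m1 × Fin m2 => Matrix.single p.1 p.2 (1 : ℝ)) := by
  have hw : ENNReal.ofReal (1 / (m1 * m2 : ℝ)) = ((m1 * m2 : ℝ≥0∞))⁻¹ := by
    rw [one_div, ENNReal.ofReal_inv_of_pos (by positivity), ENNReal.ofReal_mul (by positivity)]
    simp
  rw [unifX, discreteMeasure, hw, Fintype.sum_prod_type, smul_sum]
  simp only [smul_sum]

lemma hypLaw_mem (hm1 : 0 < m1) (hm2 : 0 < m2) (hτ : |τ| ≤ 1) (hη : 0 ≤ η) :
    memPeta m1 m2 η (hypLaw m1 m2 η τ σ) := by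
  refine ⟨isProbabilityMeasure_discreteMeasure (hypWeight_nonneg hτ) (sum_hypWeight hm1 hm2) _,
    ?_, ?_⟩
  · have hfst : Prod.fst ∘ hypAtom η =
        fun q : (Fin m1 × Fin m2) × Bool => Matrix.single q.1.1 q.1.2 (1 : ℝ) := rfl
    rw [hypLaw, map_discreteMeasure (hypWeight_nonneg hτ) _ measurable_fst, hfst,
      unifX_eq_discreteMeasure hm1 hm2]
    exact discreteMeasure_prod_bool (hypWeight_nonneg hτ) (fun _ => by positivity)
      hypWeight_true_add_false (fun p : Fin m1 × Fin m2 => Matrix.single p.1 p.2 (1 : ℝ))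
  · have hempty : hypAtom η ⁻¹' {p : Matrix (Fin m1) (Fin m2) ℝ × ℝ | ¬|p.2| ≤ η} = ∅ := by
      ext ⟨p, s⟩
      cases s <;> simp [hypAtom, boolSign, abs_of_nonneg hη]
    rw [ae_iff, hypLaw, discreteMeasure_apply (hypWeight_nonneg hτ), hempty]
    simp [wprob]

lemma risk_hypLaw (hτ : |τ| ≤ 1) (B : Matrix (Fin m1) (Fin m2) ℝ) :
    risk (hypLaw m1 m2 η τ σ) B = risk (hypLaw m1 m2 η τ σ) (hypMatrix m1 m2 η τ σ) +
      1 / (m1 * m2) * ∑ p : Fin m1 × Fin m2, (B p.1 p.2 - hypMatrix m1 m2 η τ σ p.1 p.2) ^ 2 := by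
  have hrisk (A : Matrix (Fin m1) (Fin m2) ℝ) : risk (hypLaw m1 m2 η τ σ) A =
      ∑ p : Fin m1 × Fin m2, (hypWeight τ σ (p, true) * (η - A p.1 p.2) ^ 2 +
        hypWeight τ σ (p, false) * (-η - A p.1 p.2) ^ 2) := by
    rw [risk, hypLaw, integral_discreteMeasure (hypWeight_nonneg hτ), Fintype.sum_prod_type]
    simp [hypAtom, tip_single, boolSign]
  rw [hrisk, hrisk, mul_sum, ← sum_add_distrib]
  refine sum_congr rfl fun p _ => ?_
  simp only [hypWeight, hypMatrix_apply]
  cases σ (blockOf p) <;> simp [boolSign] <;> ring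

end Hypotheses

lemma le_sqrt_div_mul_div {x D : ℝ} (hx : x ^ 2 ≤ 1) (hD : 0 < D) :
    (1 - x ^ 2) / D ≤ √((1 + x) / D * ((1 - x) / D)) := by
  refine (le_abs_self _).trans (Real.abs_le_sqrt ?_)
  have hprod : (1 + x) / D * ((1 - x) / D) = (1 - x ^ 2) / D ^ 2 := by field_simp; ring
  rw [hprod, div_pow]
  exact div_le_div_of_nonneg_right (by nlinarith) (by positivity)

lemma card_mul_sq_le_sum_sub_sq {ι : Type*} (s : Finset ι) (x : ι → ℝ) {c : ℝ}
    (h : c * ∑ i ∈ s, x i ≤ 0) : #s * c ^ 2 ≤ ∑ i ∈ s, (x i - c) ^ 2 := by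
  have hexp : ∑ i ∈ s, (x i - c) ^ 2 = ∑ i ∈ s, x i ^ 2 - 2 * (c * ∑ i ∈ s, x i) + #s * c ^ 2 := by
    simp only [sub_sq, sum_add_distrib, sum_sub_distrib, sum_const, nsmul_eq_mul, ← sum_mul,
      ← mul_sum]
    ring
  rw [hexp]
  nlinarith [sum_nonneg fun i (_ : i ∈ s) => sq_nonneg (x i)]

section Separation

variable {m1 m2 a b : ℕ} [NeZero a] [NeZero b] {τ : ℝ}

lemma filter_blockOf_eq (bt : Fin a × Fin b) :
    ({p | blockOf p = bt} : Finset (Fin m1 × Fin m2)) =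
      blockFiber m1 bt.1 ×ˢ blockFiber m2 bt.2 := by
  ext p
  simp [blockOf, blockFiber, Prod.ext_iff]

lemma card_block_le (ham : a ≤ m1) (hbm : b ≤ m2) (bt : Fin a × Fin b) :
    (#(blockFiber m1 bt.1 ×ˢ blockFiber m2 bt.2) : ℝ) ≤ 4 * (m1 * m2) / (a * b) := by
  rw [card_product, Nat.cast_mul]
  calc _ ≤ (2 * m1 / a : ℝ) * (2 * m2 / b) :=
        mul_le_mul (card_blockFiber_le_two_mul_div ham _) (card_blockFiber_le_two_mul_div hbm _)
          (by positivity) (by positivity)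
    _ = _ := by ring

lemma le_card_block (ham : a ≤ m1) (hbm : b ≤ m2) (bt : Fin a × Fin b) :
    (m1 * m2 : ℝ) / (4 * (a * b)) ≤ #(blockFiber m1 bt.1 ×ˢ blockFiber m2 bt.2) := by
  rw [card_product, Nat.cast_mul]
  calc (m1 * m2 : ℝ) / (4 * (a * b)) = (m1 / (2 * a)) * (m2 / (2 * b)) := by ring
    _ ≤ _ := mul_le_mul (div_two_mul_le_card_blockFiber ham _)
          (div_two_mul_le_card_blockFiber hbm _) (by positivity) (by positivity)

lemma sqrt_hypWeight_mul_add_ge (hτ : |τ| ≤ 1) (σ : Fin a × Fin b → Bool) (bt : Fin a × Fin b)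
    (p : Fin m1 × Fin m2) :
    1 / (m1 * m2) - τ ^ 2 / (m1 * m2) * (if blockOf p = bt then 1 else 0) ≤
      √(hypWeight τ σ (p, true) * hypWeight τ (Function.update σ bt (!σ bt)) (p, true)) +
        √(hypWeight τ σ (p, false) * hypWeight τ (Function.update σ bt (!σ bt)) (p, false)) := by
  set σ' := Function.update σ bt (!σ bt)
  by_cases hp : blockOf p = bt
  · have hterm (s : Bool) :
        (1 - τ ^ 2) / (2 * (m1 * m2)) ≤ √(hypWeight τ σ (p, s) * hypWeight τ σ' (p, s)) := by
      have hx : (τ * boolSign (σ bt) * boolSign s) ^ 2 = τ ^ 2 := by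
        rw [mul_pow, mul_pow, boolSign_sq, boolSign_sq, mul_one, mul_one]
      have hw : hypWeight τ σ (p, s) * hypWeight τ σ' (p, s) =
          (1 + τ * boolSign (σ bt) * boolSign s) / (2 * (m1 * m2)) *
            ((1 - τ * boolSign (σ bt) * boolSign s) / (2 * (m1 * m2))) := by
        simp only [hypWeight, hp, σ', Function.update_self, boolSign_not]
        ring
      have hm1 : (0 : ℝ) < m1 := by exact_mod_cast p.1.pos
      have hm2 : (0 : ℝ) < m2 := by exact_mod_cast p.2.pos
      rw [hw, ← hx]
      exact le_sqrt_div_mul_div (by rw [hx]; nlinarith [sq_abs τ, abs_nonneg τ]) (by positivity)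
    have hsum : (1 - τ ^ 2) / (2 * (m1 * m2)) + (1 - τ ^ 2) / (2 * (m1 * m2)) =
        1 / (m1 * m2) - τ ^ 2 / (m1 * m2) * 1 := by ring
    rw [if_pos hp]
    linarith [hterm true, hterm false]
  · have hw (s : Bool) : hypWeight τ σ' (p, s) = hypWeight τ σ (p, s) := by
      simp only [hypWeight, σ', Function.update_of_ne hp]
    rw [if_neg hp, hw, hw, Real.sqrt_mul_self (hypWeight_nonneg hτ _),
      Real.sqrt_mul_self (hypWeight_nonneg hτ _), hypWeight_true_add_false]
    simp

/-- Neighbouring hypotheses differ only on one block, which carries mass at most `4 / (a b)`. -/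
lemma one_sub_le_affinity_hypWeight (ham : a ≤ m1) (hbm : b ≤ m2) (hτ : |τ| ≤ 1)
    (σ : Fin a × Fin b → Bool) (bt : Fin a × Fin b) :
    1 - 4 * τ ^ 2 / (a * b) ≤ affinity (hypWeight (m1 := m1) (m2 := m2) τ σ)
      (hypWeight τ (Function.update σ bt (!σ bt))) := by
  have hm1 : (0 : ℝ) < m1 := by exact_mod_cast (Nat.pos_of_neZero a).trans_le ham
  have hm2 : (0 : ℝ) < m2 := by exact_mod_cast (Nat.pos_of_neZero b).trans_le hbm
  have hmass := mul_le_mul_of_nonneg_left (card_block_le ham hbm bt)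
    (by positivity : 0 ≤ τ ^ 2 / (m1 * m2))
  rw [show τ ^ 2 / (m1 * m2) * (4 * (m1 * m2) / (a * b)) = 4 * τ ^ 2 / (a * b) by
    field_simp] at hmass
  calc 1 - 4 * τ ^ 2 / (a * b)
      ≤ 1 - τ ^ 2 / (m1 * m2) * #(blockFiber m1 bt.1 ×ˢ blockFiber m2 bt.2) := by linarith
    _ = ∑ p : Fin m1 × Fin m2,
          (1 / (m1 * m2) - τ ^ 2 / (m1 * m2) * (if blockOf p = bt then 1 else 0)) := by
        rw [sum_sub_distrib, ← mul_sum, sum_boole, filter_blockOf_eq, sum_const, card_univ,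
          Fintype.card_prod, Fintype.card_fin, Fintype.card_fin, nsmul_eq_mul]
        push_cast
        field_simp
    _ ≤ _ := sum_le_sum fun p _ => sqrt_hypWeight_mul_add_ge hτ σ bt p
    _ = _ := by simp only [affinity, Fintype.sum_prod_type, Fintype.sum_bool]

end Separation

section RiskGap

variable {m1 m2 a b : ℕ} [NeZero a] [NeZero b] {η τ : ℝ} {σ : Fin a × Fin b → Bool}

def blockSum (B : Matrix (Fin m1) (Fin m2) ℝ) (bt : Fin a × Fin b) : ℝ :=
  ∑ p ∈ blockFiber m1 bt.1 ×ˢ blockFiber m2 bt.2, B p.1 p.2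

def wrongBlock (m1 m2 : ℕ) (σ : Fin a × Fin b → Bool) (bt : Fin a × Fin b) :
    Set (Matrix (Fin m1) (Fin m2) ℝ) :=
  {B | boolSign (σ bt) * blockSum B bt ≤ 0}

lemma sum_sq_sub_hypMatrix_ge (ham : a ≤ m1) (hbm : b ≤ m2) (hητ : 0 ≤ η * τ)
    (B : Matrix (Fin m1) (Fin m2) ℝ) :
    (∑ bt, (wrongBlock m1 m2 σ bt).indicator 1 B) * ((m1 * m2) / (4 * (a * b)) * (η * τ) ^ 2) ≤
      ∑ p : Fin m1 × Fin m2, (B p.1 p.2 - hypMatrix m1 m2 η τ σ p.1 p.2) ^ 2 := by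
  rw [sum_mul, ← sum_fiberwise univ (blockOf : Fin m1 × Fin m2 → Fin a × Fin b)]
  refine sum_le_sum fun bt _ => ?_
  rw [filter_blockOf_eq]
  by_cases hw : B ∈ wrongBlock m1 m2 σ bt
  · have hentry : ∀ p ∈ blockFiber m1 bt.1 ×ˢ blockFiber m2 bt.2,
        hypMatrix m1 m2 η τ σ p.1 p.2 = η * τ * boolSign (σ bt) := fun p hp => by
      rw [← filter_blockOf_eq, mem_filter] at hp
      rw [hypMatrix_apply, hp.2]
    rw [Set.indicator_of_mem hw, Pi.one_apply, one_mul, sum_congr rfl fun p hp => by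
      rw [hentry p hp]]
    calc (m1 * m2 : ℝ) / (4 * (a * b)) * (η * τ) ^ 2
        ≤ #(blockFiber m1 bt.1 ×ˢ blockFiber m2 bt.2) * (η * τ * boolSign (σ bt)) ^ 2 := by
          rw [mul_pow _ (boolSign _), boolSign_sq, mul_one]
          exact mul_le_mul_of_nonneg_right (le_card_block ham hbm bt) (sq_nonneg _)
      _ ≤ _ := card_mul_sq_le_sum_sub_sq _ _ <| by
          rw [mul_assoc]
          exact mul_nonpos_of_nonneg_of_nonpos hητ hw
  · rw [Set.indicator_of_notMem hw, zero_mul]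
    exact sum_nonneg fun p _ => sq_nonneg _

lemma risk_hypLaw_ge_of_wrongBlock (ham : a ≤ m1) (hbm : b ≤ m2) (hτ : |τ| ≤ 1)
    (hητ : 0 ≤ η * τ) {B : Matrix (Fin m1) (Fin m2) ℝ}
    (hB : (a * b : ℝ) / 16 ≤ ∑ bt, (wrongBlock m1 m2 σ bt).indicator 1 B) :
    risk (hypLaw m1 m2 η τ σ) (hypMatrix m1 m2 η τ σ) + (η * τ) ^ 2 / 64 ≤
      risk (hypLaw m1 m2 η τ σ) B := by
  have hm1 : (0 : ℝ) < m1 := by exact_mod_cast (Nat.pos_of_neZero a).trans_le ham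
  have hm2 : (0 : ℝ) < m2 := by exact_mod_cast (Nat.pos_of_neZero b).trans_le hbm
  have ha : (0 : ℝ) < a := by exact_mod_cast Nat.pos_of_neZero a
  have hb : (0 : ℝ) < b := by exact_mod_cast Nat.pos_of_neZero b
  have hsq := (mul_le_mul_of_nonneg_right hB (by positivity)).trans
    (sum_sq_sub_hypMatrix_ge (σ := σ) ham hbm hητ B)
  rw [show (a * b : ℝ) / 16 * ((m1 * m2) / (4 * (a * b)) * (η * τ) ^ 2) =
    (η * τ) ^ 2 / 64 * (m1 * m2) by field_simp; ring] at hsq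
  rw [risk_hypLaw hτ B, one_div_mul_eq_div]
  exact add_le_add_right ((le_div_iff₀ (by positivity)).mpr hsq) _

end RiskGap

section LowerBound

variable {m1 m2 a b n : ℕ} [NeZero a] [NeZero b] {η τ : ℝ}

def hypSample (η : ℝ) (f : Fin n → (Fin m1 × Fin m2) × Bool) :
    Fin n → Matrix (Fin m1) (Fin m2) ℝ × ℝ :=
  fun i => hypAtom η (f i)

lemma quarter_le_wprob_wrongBlock_add (ham : a ≤ m1) (hbm : b ≤ m2) (hn : 0 < n)
    (hτ : |τ| ≤ 1) (hτn : τ ^ 2 = a * b / (16 * n))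
    (g : (Fin n → Matrix (Fin m1) (Fin m2) ℝ × ℝ) → Matrix (Fin m1) (Fin m2) ℝ)
    (σ : Fin a × Fin b → Bool) (bt : Fin a × Fin b) :
    1 / 4 ≤ wprob (piWeight (hypWeight τ σ) n) ((g ∘ hypSample η) ⁻¹' wrongBlock m1 m2 σ bt) +
      wprob (piWeight (hypWeight τ (Function.update σ bt (!σ bt))) n)
        ((g ∘ hypSample η) ⁻¹' wrongBlock m1 m2 (Function.update σ bt (!σ bt)) bt) := by
  have hm1 : 0 < m1 := (Nat.pos_of_neZero a).trans_le ham
  have hm2 : 0 < m2 := (Nat.pos_of_neZero b).trans_le hbm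
  have haff : 1 - 1 / (4 * n : ℝ) ≤ affinity (hypWeight (m1 := m1) (m2 := m2) τ σ)
      (hypWeight τ (Function.update σ bt (!σ bt))) := by
    refine le_of_eq_of_le ?_ (one_sub_le_affinity_hypWeight ham hbm hτ σ bt)
    have ha : (0 : ℝ) < a := by exact_mod_cast Nat.pos_of_neZero a
    have hb : (0 : ℝ) < b := by exact_mod_cast Nat.pos_of_neZero b
    rw [hτn]
    field_simp
    ring
  have hcompl : ((g ∘ hypSample η) ⁻¹' wrongBlock m1 m2 σ bt)ᶜ ⊆
      (g ∘ hypSample η) ⁻¹' wrongBlock m1 m2 (Function.update σ bt (!σ bt)) bt := fun f hf => by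
    simp only [Set.mem_compl_iff, Set.mem_preimage, wrongBlock, Set.mem_ofPred_eq,
      not_le] at hf ⊢
    rw [Function.update_self, boolSign_not]
    linarith
  exact (quarter_le_wprob_piWeight_add_compl (hypWeight_nonneg hτ) (hypWeight_nonneg hτ)
    (sum_hypWeight hm1 hm2) (sum_hypWeight hm1 hm2) hn haff _).trans
    (add_le_add_right (wprob_mono (piWeight_nonneg (hypWeight_nonneg hτ) n) hcompl) _)

lemma exists_hypothesis_many_wrongBlock (ham : a ≤ m1) (hbm : b ≤ m2) (hn : 0 < n)
    (hτ : |τ| ≤ 1) (hτn : τ ^ 2 = a * b / (16 * n))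
    (g : (Fin n → Matrix (Fin m1) (Fin m2) ℝ × ℝ) → Matrix (Fin m1) (Fin m2) ℝ) :
    ∃ σ : Fin a × Fin b → Bool, 1 / 16 ≤ wprob (piWeight (hypWeight τ σ) n)
      {f | (a * b : ℝ) / 16 ≤ ∑ bt, (wrongBlock m1 m2 σ bt).indicator 1 (g (hypSample η f))} := by
  have hm1 : 0 < m1 := (Nat.pos_of_neZero a).trans_le ham
  have hm2 : 0 < m2 := (Nat.pos_of_neZero b).trans_le hbm
  obtain ⟨σ, hσ⟩ := exists_wprob_card_wrong_ge (fun σ => piWeight_nonneg (hypWeight_nonneg hτ) n)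
    (fun σ => by rw [sum_piWeight, sum_hypWeight hm1 hm2, one_pow]) (by norm_num : (0 : ℝ) ≤ 1 / 4)
    (quarter_le_wprob_wrongBlock_add (η := η) ham hbm hn hτ hτn g)
  have hK : 1 / 4 * (Fintype.card (Fin a × Fin b) : ℝ) / 4 = a * b / 16 := by
    simp only [Fintype.card_prod, Fintype.card_fin, Nat.cast_mul]
    ring
  rw [hK] at hσ
  exact ⟨σ, le_of_eq_of_le (by norm_num) hσ⟩

end LowerBound

lemma exists_block_dims {m1 m2 r : ℕ} (hr : 1 ≤ r) (hrm : r ≤ min m1 m2) :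
    ∃ a b : ℕ, 0 < a ∧ 0 < b ∧ a ≤ m1 ∧ b ≤ m2 ∧ min a b ≤ r ∧ a * b = max m1 m2 * r := by
  rcases le_total m1 m2 with h | h
  · exact ⟨r, m2, by omega, by omega, by omega, le_rfl, by omega, by rw [max_eq_right h, mul_comm]⟩
  · exact ⟨m1, r, by omega, by omega, le_rfl, by omega, by omega, by rw [max_eq_left h]⟩

lemma abs_sqrt_div_le_one {x n : ℝ} (hx : 0 ≤ x) (hxn : x ≤ n) : |√(x / (16 * n))| ≤ 1 := by
  rw [abs_of_nonneg (Real.sqrt_nonneg _), Real.sqrt_le_one]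
  exact div_le_one_of_le₀ (by linarith) (by linarith)

/-- Theorem 10: lower bound on the excess prediction risk in the
statistical learning setting. There are absolute constants `β ∈ (0,1)`, `c > 0` such that
`inf_Â sup_{rank(A) ≤ r} sup_{P_{XY} ∈ 𝒫_η} P(R(Â) ≥ R(A) + cη² M r/n) ≥ β`. -/
theorem minimax_lower_bound_excess_risk :
    ∃ β c : ℝ, 0 < β ∧ β < 1 ∧ 0 < c ∧
      ∀ (n m1 m2 r : ℕ) (η : ℝ),
        0 < η → 1 ≤ r → r ≤ min m1 m2 → max m1 m2 * r ≤ n →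
        ∀ Ahat : (Fin n → Matrix (Fin m1) (Fin m2) ℝ × ℝ) → Matrix (Fin m1) (Fin m2) ℝ,
          Measurable Ahat →
          ENNReal.ofReal β ≤
            ⨆ (A : Matrix (Fin m1) (Fin m2) ℝ) (_ : A.rank ≤ r)
              (P : Measure (Matrix (Fin m1) (Fin m2) ℝ × ℝ)) (h : memPeta m1 m2 η P),
              iidSample n P h.1
                {d | risk P A + c * η ^ 2 * ((max m1 m2 : ℝ) * r / n) ≤
                  risk P (Ahat d)} := by
  refine ⟨1 / 16, 1 / 1024, by norm_num, by norm_num, by norm_num, ?_⟩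
  intro n m1 m2 r η hη hr hrm hn Ahat _
  obtain ⟨a, b, ha, hb, ham, hbm, hmin, hab⟩ := exists_block_dims hr hrm
  have := NeZero.of_pos ha
  have := NeZero.of_pos hb
  have hn0 : 0 < n := by nlinarith [Nat.mul_le_mul (le_max_left m1 m2) hr]
  set τ := √(a * b / (16 * n) : ℝ)
  have hτn : τ ^ 2 = a * b / (16 * n) := Real.sq_sqrt (by positivity)
  have hτ : |τ| ≤ 1 := abs_sqrt_div_le_one (by positivity) (by exact_mod_cast hab ▸ hn)
  obtain ⟨σ, hσ⟩ := exists_hypothesis_many_wrongBlock (η := η) ham hbm hn0 hτ hτn Ahat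
  have hmem := hypLaw_mem (σ := σ) (ha.trans_le ham) (hb.trans_le hbm) hτ hη.le
  refine le_iSup_of_le (hypMatrix m1 m2 η τ σ) <| le_iSup_of_le (rank_hypMatrix_le.trans hmin) <|
    le_iSup_of_le (hypLaw m1 m2 η τ σ) <| le_iSup_of_le hmem ?_
  rw [iidSample, hypLaw, pi_discreteMeasure (hypWeight_nonneg hτ)
    (sum_hypWeight (ha.trans_le ham) (hb.trans_le hbm)),
    discreteMeasure_apply (piWeight_nonneg (hypWeight_nonneg hτ) n)]
  refine ENNReal.ofReal_le_ofReal <|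
    hσ.trans <| wprob_mono (piWeight_nonneg (hypWeight_nonneg hτ) n) fun f hf => ?_
  have hgap : 1 / 1024 * η ^ 2 * ((max m1 m2 : ℝ) * r / n) = (η * τ) ^ 2 / 64 := by
    have hab' : (a * b : ℝ) = max (m1 : ℝ) m2 * r := by rw [← Nat.cast_max]; exact_mod_cast hab
    rw [mul_pow, hτn, ← hab']
    ring
  rw [Set.mem_preimage, Set.mem_ofPred_eq, hgap]
  exact risk_hypLaw_ge_of_wrongBlock ham hbm hτ (by positivity) hf

end
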